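/- Let {(x^k, y^k)} be a sequence generated by the inexact penalty decomposition method, i.e., for every k one has ‖∇_x q_{τ_k}(x^{k+1}, y^{k+1})‖ ≤ δ_k and y^{k+1} ∈ Π_D(x^{k+1}), where δ_k → 0, δ_k ≥ 0, and τ_k → ∞ with τ_k > 0. If (x̄, ȳ) is an accumulation point of {(x^k, y^k)} that is feasible for the decomposed problem, i.e., G(x̄) ∈ C, x̄ = ȳ and ȳ ∈ D, then (x̄, ȳ) is an AM-stationary point of the decomposed problem: there exist subsequential sequences x^k → x̄, y^k → ȳ with y^k ∈ D, ε^k → 0 in X, z^k → 0 in Y, and multipliers λ^k ∈ Y, μ^k ∈ X such that for all k: ε^k = ∇f(x^k) + G'(x^k)*λ^k + μ^k, μ^k ∈ N_D^lim(y^k), and λ^k ∈ N_C(G(x^k) − z^k). -/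

import Mathlib

/-!
The iterates themselves certify AM-stationarity. With `λ = τ (G x - P_C (G x))` and
`μ = τ (x - y)`, the gradient of the penalty function is exactly `∇f(x) + G'(x)* λ + μ`, and it
tends to zero along the iterates. Since `y ∈ Π_D(x)`, `μ` is a proximal, hence limiting, normal
to `D` at `y`; the variational inequality of the convex projection makes `λ` a normal to `C` at
`P_C (G x) = G x - z` with `z = G x - P_C (G x)`; and `‖z‖ = dist_C (G x) ≤ ‖G x - G x̄‖ → 0`
because `G x̄ ∈ C`. The gradient formula rests on the differentiability of `dist_C²`: it is
bounded above by its tangent paraboloid at every point, and `w ↦ 2 (w - P_C w)` is Lipschitz.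
-/

open Filter Topology RealInnerProductSpace

noncomputable section

/-- The (set-valued) Euclidean projection of `x` onto `D`:
`Π_D(x) = argmin_{z ∈ D} ‖z - x‖`. -/
def projSet {E : Type*} [NormedAddCommGroup E] (D : Set E) (x : E) : Set E :=
  {z | z ∈ D ∧ ∀ w ∈ D, ‖z - x‖ ≤ ‖w - x‖}

/-- The limiting (Mordukhovich) normal cone to `D` at `x`:
`N_D^lim(x) = limsup_{v → x} cone(v - Π_D(v))`, empty outside `D`. -/
def limNormalCone {E : Type*} [NormedAddCommGroup E] [NormedSpace ℝ E]
    (D : Set E) (x : E) : Set E :=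
  {w | x ∈ D ∧ ∃ v ws : ℕ → E,
    Tendsto v atTop (𝓝 x) ∧ Tendsto ws atTop (𝓝 w) ∧
    ∀ j, ∃ t : ℝ, ∃ p, 0 ≤ t ∧ p ∈ projSet D (v j) ∧ ws j = t • (v j - p)}

/-- The normal cone (of convex analysis) to the convex set `C` at `y`, empty outside `C`. -/
def convNormalCone {E : Type*} [NormedAddCommGroup E] [InnerProductSpace ℝ E]
    (C : Set E) (y : E) : Set E :=
  {l | y ∈ C ∧ ∀ c ∈ C, ⟪l, c - y⟫ ≤ 0}

variable {X Y : Type*} [NormedAddCommGroup X] [InnerProductSpace ℝ X] [FiniteDimensional ℝ X]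
  [NormedAddCommGroup Y] [InnerProductSpace ℝ Y] [FiniteDimensional ℝ Y]

/-- The partial penalty function
`q_τ(x,y) = f(x) + (τ/2) (‖x-y‖² + dist_C(G(x))²)`, where `dist_C(w) = ‖w - P_C(w)‖`
and `PC` denotes the Euclidean projection onto `C`. -/
def qpen (f : X → ℝ) (G : X → Y) (PC : Y → Y) (τ : ℝ) (x y : X) : ℝ :=
  f x + τ / 2 * (‖x - y‖ ^ 2 + ‖G x - PC (G x)‖ ^ 2)

/-- The gradient `∇_x q_τ(x, y)` of the penalty function w.r.t. the first block. -/
def gradqx (f : X → ℝ) (G : X → Y) (PC : Y → Y) (τ : ℝ) (x y : X) : X :=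
  gradient (fun u => qpen f G PC τ u y) x

def IsMetricProjection {E : Type*} [NormedAddCommGroup E] (C : Set E) (P : E → E) : Prop :=
  ∀ w, P w ∈ C ∧ ∀ c ∈ C, ‖P w - w‖ ≤ ‖c - w‖

section Projection

variable {E : Type*} [NormedAddCommGroup E] [InnerProductSpace ℝ E] {C : Set E} {P : E → E}

theorem IsMetricProjection.inner_sub_nonpos (hP : IsMetricProjection C P) (hC : Convex ℝ C)
    (w : E) {c : E} (hc : c ∈ C) : ⟪w - P w, c - P w⟫ ≤ 0 := by
  have : Nonempty C := ⟨⟨P w, (hP w).1⟩⟩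
  have hbdd : BddBelow (Set.range fun c : C => ‖w - c‖) :=
    ⟨0, Set.forall_mem_range.2 fun _ => norm_nonneg _⟩
  have hmin : ‖w - P w‖ = ⨅ c : C, ‖w - c‖ :=
    le_antisymm (le_ciInf fun c => by simpa only [norm_sub_rev w] using (hP w).2 c c.2)
      (ciInf_le hbdd ⟨P w, (hP w).1⟩)
  exact (norm_eq_iInf_iff_real_inner_le_zero hC (hP w).1).1 hmin c hc

theorem IsMetricProjection.norm_sub_le_norm_sub (hP : IsMetricProjection C P) (hC : Convex ℝ C)
    (w₁ w₂ : E) : ‖P w₁ - P w₂‖ ≤ ‖w₁ - w₂‖ := by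
  have h₁ := hP.inner_sub_nonpos hC w₁ (hP w₂).1
  have h₂ := hP.inner_sub_nonpos hC w₂ (hP w₁).1
  rw [← neg_sub (P w₁) (P w₂), inner_neg_right, neg_nonpos] at h₁
  have hsq : ‖P w₁ - P w₂‖ ^ 2 ≤ ⟪w₁ - w₂, P w₁ - P w₂⟫ := by
    have expand : ⟪w₁ - w₂, P w₁ - P w₂⟫ = ⟪w₁ - P w₁, P w₁ - P w₂⟫
        - ⟪w₂ - P w₂, P w₁ - P w₂⟫ + ‖P w₁ - P w₂‖ ^ 2 := by
      rw [← real_inner_self_eq_norm_sq, ← inner_sub_left, ← inner_add_left]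
      congr 1
      abel
    linarith
  have := real_inner_le_norm (w₁ - w₂) (P w₁ - P w₂)
  nlinarith [norm_nonneg (P w₁ - P w₂), norm_nonneg (w₁ - w₂)]

theorem IsMetricProjection.sq_norm_add_sub_le (hP : IsMetricProjection C P) (w v : E) :
    ‖w + v - P (w + v)‖ ^ 2 ≤ ‖w - P w‖ ^ 2 + 2 * ⟪w - P w, v⟫ + ‖v‖ ^ 2 := by
  have hle : ‖w + v - P (w + v)‖ ≤ ‖w + v - P w‖ := by
    simpa only [norm_sub_rev (w + v)] using (hP (w + v)).2 (P w) (hP w).1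
  have hexp : ‖w + v - P w‖ ^ 2 = ‖w - P w‖ ^ 2 + 2 * ⟪w - P w, v⟫ + ‖v‖ ^ 2 := by
    rw [show w + v - P w = (w - P w) + v by abel, norm_add_sq_real]
  rw [← hexp]
  gcongr

theorem IsMetricProjection.smul_sub_mem_convNormalCone (hP : IsMetricProjection C P)
    (hC : Convex ℝ C) (w : E) {t : ℝ} (ht : 0 ≤ t) :
    t • (w - P w) ∈ convNormalCone C (P w) :=
  ⟨(hP w).1, fun _ hc => by
    rw [real_inner_smul_left]
    exact mul_nonpos_of_nonneg_of_nonpos ht (hP.inner_sub_nonpos hC w hc)⟩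

end Projection

theorem hasGradientAt_of_le_sq_of_norm_sub_le {E : Type*} [NormedAddCommGroup E]
    [InnerProductSpace ℝ E] [CompleteSpace E] {g : E → ℝ} {a : E → E} {K L : ℝ}
    (hg : ∀ u v, g (u + v) ≤ g u + ⟪a u, v⟫ + K * ‖v‖ ^ 2)
    (ha : ∀ u v, ‖a (u + v) - a u‖ ≤ L * ‖v‖) (w : E) :
    HasGradientAt g (a w) w := by
  rw [hasGradientAt_iff_isLittleO_nhds_zero]
  refine (Asymptotics.IsBigO.of_bound (K + L) (Eventually.of_forall fun v => ?_)).trans_isLittleO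
    (Asymptotics.isLittleO_norm_pow_id one_lt_two)
  have upper := hg w v
  -- the upper bound at `w + v` in the direction `-v` is a lower bound at `w`
  have lower := hg (w + v) (-v)
  rw [add_neg_cancel_right, inner_neg_right, norm_neg] at lower
  have hcross : -(L * ‖v‖ ^ 2) ≤ ⟪a (w + v) - a w, v⟫ := by
    have := neg_le_of_abs_le (abs_real_inner_le_norm (a (w + v) - a w) v)
    nlinarith [ha w v, norm_nonneg v]
  have hL : 0 ≤ L * ‖v‖ ^ 2 := by nlinarith [ha w v, norm_nonneg v, norm_nonneg (a (w + v) - a w)]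
  rw [inner_sub_left] at hcross
  rw [norm_pow, norm_norm, Real.norm_eq_abs, abs_le]
  constructor <;> nlinarith

theorem IsMetricProjection.hasGradientAt_sq_norm_sub {E : Type*} [NormedAddCommGroup E]
    [InnerProductSpace ℝ E] [CompleteSpace E] {C : Set E} {P : E → E}
    (hP : IsMetricProjection C P) (hC : Convex ℝ C) (w : E) :
    HasGradientAt (fun v => ‖v - P v‖ ^ 2) ((2 : ℝ) • (w - P w)) w := by
  refine hasGradientAt_of_le_sq_of_norm_sub_le (g := fun v => ‖v - P v‖ ^ 2)
    (a := fun u => (2 : ℝ) • (u - P u)) (K := 1) (L := 4) (fun u v => ?_) (fun u v => ?_) w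
  · rw [real_inner_smul_left]
    linarith [hP.sq_norm_add_sub_le u v]
  · have hPv : ‖P (u + v) - P u‖ ≤ ‖v‖ := by
      simpa only [add_sub_cancel_left] using hP.norm_sub_le_norm_sub hC (u + v) u
    calc ‖(2 : ℝ) • (u + v - P (u + v)) - (2 : ℝ) • (u - P u)‖
        = 2 * ‖v - (P (u + v) - P u)‖ := by
          rw [← smul_sub, norm_smul, Real.norm_two]
          congr 2
          abel
      _ ≤ 2 * (‖v‖ + ‖P (u + v) - P u‖) := by gcongr; exact norm_sub_le _ _
      _ ≤ 4 * ‖v‖ := by linarith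

theorem gradqx_eq {f : X → ℝ} {G : X → Y} {C : Set Y} {PC : Y → Y} {x : X}
    (hf : DifferentiableAt ℝ f x) (hG : DifferentiableAt ℝ G x)
    (hPC : IsMetricProjection C PC) (hC : Convex ℝ C) (τ : ℝ) (y : X) :
    gradqx f G PC τ x y = gradient f x
      + ContinuousLinearMap.adjoint (fderiv ℝ G x) (τ • (G x - PC (G x))) + τ • (x - y) := by
  have hdist := (hPC.hasGradientAt_sq_norm_sub hC (G x)).hasFDerivAt.comp x hG.hasFDerivAt
  have hq : HasFDerivAt (fun u => qpen f G PC τ u y) _ x := hf.hasFDerivAt.add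
    ((((hasFDerivAt_id x).sub_const y).norm_sq.add hdist).const_mul (τ / 2))
  refine (hasGradientAt_iff_hasFDerivAt.2 (hq.congr_fderiv ?_)).gradient
  ext v
  simp only [toDual_gradient, id_eq, map_sub, ContinuousLinearMap.comp_id, map_smul,
    ContinuousLinearMap.smul_comp, ContinuousLinearMap.sub_comp, smul_add, add_apply, smul_apply,
    sub_apply, coe_innerSL_apply, nsmul_eq_mul, Nat.cast_ofNat, smul_eq_mul,
    ContinuousLinearMap.comp_apply, InnerProductSpace.toDual_apply_apply, map_add,
    ContinuousLinearMap.adjoint_inner_left]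
  ring

section ProximalNormal

variable {E : Type*} [NormedAddCommGroup E] [NormedSpace ℝ E] {D : Set E} {x p : E}

theorem mem_projSet_add_smul_sub (hp : p ∈ projSet D x) {s : ℝ} (hs₀ : 0 ≤ s) (hs₁ : s ≤ 1) :
    p ∈ projSet D (p + s • (x - p)) := by
  refine ⟨hp.1, fun w hw => ?_⟩
  have hpv : ‖p - (p + s • (x - p))‖ = s * ‖x - p‖ := by
    rw [sub_add_cancel_left, norm_neg, norm_smul, Real.norm_of_nonneg hs₀]
  have hxv : ‖x - (p + s • (x - p))‖ = (1 - s) * ‖x - p‖ := by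
    rw [show x - (p + s • (x - p)) = (1 - s) • (x - p) by module, norm_smul,
      Real.norm_of_nonneg (by linarith)]
  have hpx : ‖x - p‖ ≤ ‖w - x‖ := by simpa only [norm_sub_rev x] using hp.2 w hw
  have htri := norm_sub_le_norm_sub_add_norm_sub w (p + s • (x - p)) x
  rw [norm_sub_rev (p + s • (x - p))] at htri
  nlinarith

theorem smul_sub_mem_limNormalCone (hp : p ∈ projSet D x) {t : ℝ} (ht : 0 ≤ t) :
    t • (x - p) ∈ limNormalCone D p := by
  refine ⟨hp.1, fun i : ℕ => p + (1 / ((i : ℝ) + 1)) • (x - p), fun _ => t • (x - p), ?_,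
    tendsto_const_nhds, fun i => ⟨t * ((i : ℝ) + 1), p, by positivity,
      mem_projSet_add_smul_sub hp (by positivity) ?_, ?_⟩⟩
  · simpa using tendsto_const_nhds.add
      ((tendsto_one_div_add_atTop_nhds_zero_nat (𝕜 := ℝ)).smul_const (x - p))
  · exact div_le_one_of_le₀ (by linarith [i.cast_nonneg (α := ℝ)]) (by positivity)
  · rw [add_sub_cancel_left, smul_smul]
    field_simp

end ProximalNormal

theorem StrictMono.exists_tendsto_add_one_eq {φ : ℕ → ℕ} (hφ : StrictMono φ) :
    ∃ ψ : ℕ → ℕ, Tendsto ψ atTop atTop ∧ ∀ j, ψ j + 1 = φ (j + 1) := by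
  have h (j : ℕ) : j + 1 ≤ φ (j + 1) := hφ.le_apply
  exact ⟨fun j => φ (j + 1) - 1,
    tendsto_atTop_mono (fun j => show j ≤ φ (j + 1) - 1 by have := h j; omega) tendsto_id,
    fun j => show φ (j + 1) - 1 + 1 = φ (j + 1) by have := h j; omega⟩

theorem pd_feasible_accumulation_point_is_AM_stationary_general
    (f : X → ℝ) (G : X → Y) (C : Set Y) (D : Set X)
    (hf : ContDiff ℝ 1 f) (hG : ContDiff ℝ 1 G)
    (hCconv : Convex ℝ C)
    (PC : Y → Y) (hPC : ∀ w, PC w ∈ C ∧ ∀ c ∈ C, ‖PC w - w‖ ≤ ‖c - w‖)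
    (δ τs : ℕ → ℝ) (hδ0 : Tendsto δ atTop (𝓝 0))
    (hτpos : ∀ k, 0 < τs k)
    (x y : ℕ → X)
    (halg : ∀ k, ‖gradqx f G PC (τs k) (x (k + 1)) (y (k + 1))‖ ≤ δ k ∧
      y (k + 1) ∈ projSet D (x (k + 1)))
    (xb yb : X) (φ : ℕ → ℕ) (hφ : StrictMono φ)
    (hxb : Tendsto (fun j => x (φ j)) atTop (𝓝 xb))
    (hyb : Tendsto (fun j => y (φ j)) atTop (𝓝 yb))
    (hfeas : G xb ∈ C ∧ xb = yb ∧ yb ∈ D) :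
    ∃ (xs ys εs : ℕ → X) (zs lam : ℕ → Y) (mu : ℕ → X),
      Tendsto xs atTop (𝓝 xb) ∧ Tendsto ys atTop (𝓝 yb) ∧ (∀ k, ys k ∈ D) ∧
      Tendsto εs atTop (𝓝 0) ∧ Tendsto zs atTop (𝓝 0) ∧
      ∀ k, εs k = gradient f (xs k) +
            ContinuousLinearMap.adjoint (fderiv ℝ G (xs k)) (lam k) + mu k ∧
        mu k ∈ limNormalCone D (ys k) ∧
        lam k ∈ convNormalCone C (G (xs k) - zs k) := by
  obtain ⟨ψ, hψ, hψφ⟩ := hφ.exists_tendsto_add_one_eq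
  set xs : ℕ → X := fun j => x (ψ j + 1)
  set ys : ℕ → X := fun j => y (ψ j + 1)
  set zs : ℕ → Y := fun j => G (xs j) - PC (G (xs j))
  have hxs : Tendsto xs atTop (𝓝 xb) := by
    simp_rw [xs, hψφ]
    exact hxb.comp (tendsto_add_atTop_nat 1)
  have hys : Tendsto ys atTop (𝓝 yb) := by
    simp_rw [ys, hψφ]
    exact hyb.comp (tendsto_add_atTop_nat 1)
  have hzs : Tendsto zs atTop (𝓝 0) := by
    refine squeeze_zero_norm (fun j => ?_)
      (tendsto_iff_norm_sub_tendsto_zero.1 ((hG.continuous.tendsto xb).comp hxs))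
    have hdist := (hPC (G (xs j))).2 (G xb) hfeas.1
    rwa [norm_sub_rev, norm_sub_rev (G xb)] at hdist
  refine ⟨xs, ys, fun j => gradqx f G PC (τs (ψ j)) (xs j) (ys j), zs,
    fun j => τs (ψ j) • zs j, fun j => τs (ψ j) • (xs j - ys j), hxs, hys,
    fun j => (halg (ψ j)).2.1, squeeze_zero_norm (fun j => (halg (ψ j)).1) (hδ0.comp hψ), hzs,
    fun j => ⟨?_, smul_sub_mem_limNormalCone (halg (ψ j)).2 (hτpos _).le, ?_⟩⟩
  · exact gradqx_eq (hf.differentiable one_ne_zero).differentiableAt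
      (hG.differentiable one_ne_zero).differentiableAt hPC hCconv _ _
  · rw [sub_sub_cancel]
    exact IsMetricProjection.smul_sub_mem_convNormalCone hPC hCconv _ (hτpos _).le

/-- a feasible accumulation point of the inexact penalty decomposition method
is an AM-stationary point of the decomposed problem
`min f(x)  s.t.  x - y = 0, G(x) ∈ C, y ∈ D`. -/
theorem pd_feasible_accumulation_point_is_AM_stationary
    (f : X → ℝ) (G : X → Y) (C : Set Y) (D : Set X)
    (hf : ContDiff ℝ 1 f) (hG : ContDiff ℝ 1 G)
    (hCne : C.Nonempty) (hCcl : IsClosed C) (hCconv : Convex ℝ C)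
    (hDne : D.Nonempty) (hDcl : IsClosed D)
    (PC : Y → Y) (hPC : ∀ w, PC w ∈ C ∧ ∀ c ∈ C, ‖PC w - w‖ ≤ ‖c - w‖)
    (δ τs : ℕ → ℝ) (hδnn : ∀ k, 0 ≤ δ k) (hδ0 : Tendsto δ atTop (𝓝 0))
    (hτpos : ∀ k, 0 < τs k) (hτ : Tendsto τs atTop atTop)
    (x y : ℕ → X)
    (halg : ∀ k, ‖gradqx f G PC (τs k) (x (k + 1)) (y (k + 1))‖ ≤ δ k ∧
      y (k + 1) ∈ projSet D (x (k + 1)))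
    (xb yb : X) (φ : ℕ → ℕ) (hφ : StrictMono φ)
    (hxb : Tendsto (fun j => x (φ j)) atTop (𝓝 xb))
    (hyb : Tendsto (fun j => y (φ j)) atTop (𝓝 yb))
    (hfeas : G xb ∈ C ∧ xb = yb ∧ yb ∈ D) :
    ∃ (xs ys εs : ℕ → X) (zs lam : ℕ → Y) (mu : ℕ → X),
      Tendsto xs atTop (𝓝 xb) ∧ Tendsto ys atTop (𝓝 yb) ∧ (∀ k, ys k ∈ D) ∧
      Tendsto εs atTop (𝓝 0) ∧ Tendsto zs atTop (𝓝 0) ∧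
      ∀ k, εs k = gradient f (xs k) +
            ContinuousLinearMap.adjoint (fderiv ℝ G (xs k)) (lam k) + mu k ∧
        mu k ∈ limNormalCone D (ys k) ∧
        lam k ∈ convNormalCone C (G (xs k) - zs k) :=
  pd_feasible_accumulation_point_is_AM_stationary_general f G C D hf hG hCconv PC hPC δ τs hδ0 hτpos
    x y halg xb yb φ hφ hxb hyb hfeas
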